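/- Let d ≥ 1, let F : ℝ^d → ℝ be ℓ-smooth, let λ > 0, let x ∈ ℝ^d, and let u be a random vector uniformly distributed on the Euclidean sphere √d·S^{d−1} = {x ∈ ℝ^d : ‖x‖ = √d}. Let H be a real symmetric positive semi-definite d×d matrix with operator norm ‖H‖₂ ≤ ℓ and trace tr(H) ≤ r·ℓ for some r > 0. Define G_λ(x) = ((F(x + λu) − F(x − λu)) / (2λ)) · u. Then E[ G_λ(x)ᵀ H G_λ(x) ] ≤ 2ℓ(r + 2) · ‖∇F(x)‖² + (ℓ³/2) · λ² · d² · r. -/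

import Mathlib

open MeasureTheory Real
open scoped RealInnerProductSpace ENNReal

noncomputable section

/-- The uniform (rotation-invariant) probability measure on the sphere of radius `√d`
centered at the origin in `ℝ^d`. -/
def IsUniformOnSphere (d : ℕ) (μ : Measure (EuclideanSpace ℝ (Fin d))) : Prop :=
  IsProbabilityMeasure μ ∧
  μ (Metric.sphere (0 : EuclideanSpace ℝ (Fin d)) (Real.sqrt d)) = 1 ∧
  ∀ T : EuclideanSpace ℝ (Fin d) ≃ₗᵢ[ℝ] EuclideanSpace ℝ (Fin d), Measure.map T μ = μ

/-- The quadratic form `vᵀ H v` of a `d × d` matrix `H`. -/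
def quadForm {d : ℕ} (H : Matrix (Fin d) (Fin d) ℝ) (v : EuclideanSpace ℝ (Fin d)) : ℝ :=
  ∑ i, ∑ j, v i * H i j * v j

/-!
Write `c u` for the central difference quotient and `s u = ⟪∇F x, u⟫`. The second-order Taylor
bound for an `ℓ`-smooth function gives `|c u - s u| ≤ ℓ λ ‖u‖² / 2`, hence
`c u ^ 2 ≤ 2 (s u) ^ 2 + ℓ² λ² d² / 2` on the sphere, so it suffices to bound `E[s² uᵀHu]` and
`E[uᵀHu]`. Diagonalising `H`, both reduce to the moments `E ⟪v, u⟫² = ‖v‖²` and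
`E[⟪g, u⟫² ⟪v, u⟫²] = d / (d + 2) (‖g‖² + 2 ⟪g, v⟫²)` for unit `v` of the uniform distribution on
the sphere. These follow from rotation invariance alone: two pairs of vectors with the same Gram
matrix are exchanged by a product of two reflections, the rotation by `π / 4` in a coordinate plane
gives `E u₁⁴ = 3 E u₁²u₂²`, and `‖u‖² = d` gives `E u₁⁴ + (d - 1) E u₁²u₂² = d`.
-/

section Taylor

variable {E : Type*} [NormedAddCommGroup E] [InnerProductSpace ℝ E] [CompleteSpace E]

theorem abs_sub_sub_inner_gradient_le {F : E → ℝ} {ℓ : ℝ} (hF : Differentiable ℝ F)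
    (hF' : ∀ x y, ‖gradient F x - gradient F y‖ ≤ ℓ * ‖x - y‖) (a w : E) :
    |F (a + w) - F a - ⟪gradient F a, w⟫| ≤ ℓ / 2 * ‖w‖ ^ 2 := by
  set h : ℝ → ℝ := fun t => F (a + t • w) - F a - t * ⟪gradient F a, w⟫
  have hderiv : ∀ t : ℝ, HasDerivAt h (⟪gradient F (a + t • w) - gradient F a, w⟫) t := by
    intro t
    have hpath : HasDerivAt (fun t : ℝ => a + t • w) w t := by
      simpa using ((hasDerivAt_id t).smul_const w).const_add a
    have hcomp : HasDerivAt (fun t : ℝ => F (a + t • w)) ⟪gradient F (a + t • w), w⟫ t := by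
      rw [inner_gradient_left]
      exact (hF (a + t • w)).hasFDerivAt.comp_hasDerivAt t hpath
    exact ((hcomp.sub_const (F a)).sub ((hasDerivAt_id t).mul_const _)).congr_deriv
      (by rw [inner_sub_left, one_mul])
  have hbound : ∀ t ∈ Set.Ico (0 : ℝ) 1,
      ‖⟪gradient F (a + t • w) - gradient F a, w⟫‖ ≤ ℓ * ‖w‖ ^ 2 * t := by
    intro t ht
    calc ‖⟪gradient F (a + t • w) - gradient F a, w⟫‖
        ≤ ‖gradient F (a + t • w) - gradient F a‖ * ‖w‖ := norm_inner_le_norm _ _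
      _ ≤ ℓ * ‖t • w‖ * ‖w‖ := by
          gcongr
          simpa using hF' (a + t • w) a
      _ = ℓ * ‖w‖ ^ 2 * t := by
          rw [norm_smul, Real.norm_of_nonneg ht.1]; ring
  have hB : ∀ t : ℝ, HasDerivAt (fun t => ℓ / 2 * ‖w‖ ^ 2 * t ^ 2) (ℓ * ‖w‖ ^ 2 * t) t := by
    intro t
    refine ((hasDerivAt_pow 2 t).const_mul (ℓ / 2 * ‖w‖ ^ 2)).congr_deriv ?_
    push_cast; ring
  have := image_norm_le_of_norm_deriv_right_le_deriv_boundary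
    (fun t _ => (hderiv t).continuousAt.continuousWithinAt)
    (fun t _ => (hderiv t).hasDerivWithinAt) (by simp [h]) hB hbound
    (Set.right_mem_Icc.2 zero_le_one)
  simpa [h] using this

theorem abs_centralDiff_sub_inner_le {F : E → ℝ} {ℓ : ℝ} (hF : Differentiable ℝ F)
    (hF' : ∀ x y, ‖gradient F x - gradient F y‖ ≤ ℓ * ‖x - y‖) (x u : E) {t : ℝ} (ht : 0 < t) :
    |(F (x + t • u) - F (x - t • u)) / (2 * t) - ⟪gradient F x, u⟫| ≤ ℓ * t * ‖u‖ ^ 2 / 2 := by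
  have hfwd := abs_sub_sub_inner_gradient_le hF hF' x (t • u)
  have hbwd := abs_sub_sub_inner_gradient_le hF hF' x (-(t • u))
  rw [norm_neg, ← sub_eq_add_neg, inner_neg_right] at hbwd
  rw [real_inner_smul_right] at hfwd hbwd
  rw [norm_smul, Real.norm_of_nonneg ht.le] at hfwd hbwd
  rw [div_sub' (by positivity), abs_div, abs_of_pos (by positivity : (0 : ℝ) < 2 * t),
    div_le_iff₀ (by positivity)]
  have hsplit : F (x + t • u) - F (x - t • u) - 2 * t * ⟪gradient F x, u⟫
      = (F (x + t • u) - F x - t * ⟪gradient F x, u⟫)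
        - (F (x - t • u) - F x - -(t * ⟪gradient F x, u⟫)) := by ring
  calc |F (x + t • u) - F (x - t • u) - 2 * t * ⟪gradient F x, u⟫|
      ≤ |F (x + t • u) - F x - t * ⟪gradient F x, u⟫|
        + |F (x - t • u) - F x - -(t * ⟪gradient F x, u⟫)| := hsplit ▸ abs_sub _ _
    _ ≤ ℓ / 2 * (t * ‖u‖) ^ 2 + ℓ / 2 * (t * ‖u‖) ^ 2 := add_le_add hfwd hbwd
    _ = ℓ * t * ‖u‖ ^ 2 / 2 * (2 * t) := by ring

theorem sq_centralDiff_le {F : E → ℝ} {ℓ : ℝ} (hF : Differentiable ℝ F)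
    (hF' : ∀ x y, ‖gradient F x - gradient F y‖ ≤ ℓ * ‖x - y‖) (x u : E) {t : ℝ} (ht : 0 < t) :
    ((F (x + t • u) - F (x - t • u)) / (2 * t)) ^ 2
      ≤ 2 * ⟪gradient F x, u⟫ ^ 2 + ℓ ^ 2 * t ^ 2 * ‖u‖ ^ 4 / 2 := by
  set c := (F (x + t • u) - F (x - t • u)) / (2 * t)
  set s := ⟪gradient F x, u⟫
  have h := abs_le.1 (abs_centralDiff_sub_inner_le hF hF' x u ht)
  have hsq : (c - s) ^ 2 ≤ (ℓ * t * ‖u‖ ^ 2 / 2) ^ 2 := sq_le_sq' h.1 h.2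
  -- `c² = 2 s² + 2 (c - s)² - (c - 2 s)²`
  nlinarith [sq_nonneg (c - 2 * s)]

end Taylor

section Isometry

variable {E : Type*} [NormedAddCommGroup E] [InnerProductSpace ℝ E]

theorem exists_linearIsometryEquiv_map_pair {v w v' w' : E} (hv : ‖v‖ = ‖v'‖)
    (hw : ‖w‖ = ‖w'‖) (hvw : ⟪v, w⟫ = ⟪v', w'⟫) :
    ∃ T : E ≃ₗᵢ[ℝ] E, T v = v' ∧ T w = w' := by
  set R₁ := Submodule.reflection (ℝ ∙ (v - v'))ᗮ
  set R₂ := Submodule.reflection (ℝ ∙ (R₁ w - w'))ᗮ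
  have hR₁v : R₁ v = v' := Submodule.reflection_sub hv
  have hR₂ : R₂ (R₁ w) = w' := Submodule.reflection_sub (by rw [LinearIsometryEquiv.norm_map, hw])
  have hv'_mem : v' ∈ (ℝ ∙ (R₁ w - w'))ᗮ := by
    rw [Submodule.mem_orthogonal_singleton_iff_inner_left, inner_sub_right, ← hvw, ← hR₁v,
      LinearIsometryEquiv.inner_map_map, sub_self]
  refine ⟨R₁.trans R₂, ?_, hR₂⟩
  simp only [LinearIsometryEquiv.trans_apply, hR₁v]
  exact Submodule.reflection_mem_subspace_eq_self hv'_mem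

end Isometry

section QuadForm

variable {d : ℕ}

theorem quadForm_eq_inner (H : Matrix (Fin d) (Fin d) ℝ) (v : EuclideanSpace ℝ (Fin d)) :
    quadForm H v = ⟪v, Matrix.toEuclideanCLM (𝕜 := ℝ) H v⟫ := by
  simp [quadForm, PiLp.inner_apply, Matrix.ofLp_toEuclideanCLM, Matrix.mulVec, dotProduct,
    Finset.mul_sum, mul_comm, mul_left_comm, mul_assoc]

theorem quadForm_smul (H : Matrix (Fin d) (Fin d) ℝ) (c : ℝ) (v : EuclideanSpace ℝ (Fin d)) :
    quadForm H (c • v) = c ^ 2 * quadForm H v := by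
  simp only [quadForm, PiLp.smul_apply, smul_eq_mul, Finset.mul_sum]
  congr! 2; ring

theorem quadForm_le_opNorm_mul_norm_sq (H : Matrix (Fin d) (Fin d) ℝ)
    (v : EuclideanSpace ℝ (Fin d)) :
    quadForm H v ≤ ‖Matrix.toEuclideanCLM (𝕜 := ℝ) H‖ * ‖v‖ ^ 2 := by
  rw [quadForm_eq_inner]
  calc ⟪v, Matrix.toEuclideanCLM (𝕜 := ℝ) H v⟫ ≤ ‖v‖ * ‖Matrix.toEuclideanCLM (𝕜 := ℝ) H v‖ :=
        real_inner_le_norm _ _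
    _ ≤ ‖v‖ * (‖Matrix.toEuclideanCLM (𝕜 := ℝ) H‖ * ‖v‖) := by
        gcongr
        exact ContinuousLinearMap.le_opNorm _ _
    _ = _ := by ring

theorem Matrix.IsHermitian.quadForm_eq_sum {H : Matrix (Fin d) (Fin d) ℝ} (hH : H.IsHermitian)
    (v : EuclideanSpace ℝ (Fin d)) :
    quadForm H v = ∑ i, hH.eigenvalues i * ⟪hH.eigenvectorBasis i, v⟫ ^ 2 := by
  set b := hH.eigenvectorBasis
  have hb : ∀ i, Matrix.toEuclideanCLM (𝕜 := ℝ) H (b i) = hH.eigenvalues i • b i := fun i =>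
    WithLp.ofLp_injective 2 <| by
      simpa [Matrix.ofLp_toEuclideanCLM] using hH.mulVec_eigenvectorBasis i
  rw [quadForm_eq_inner]
  nth_rw 2 [← b.sum_repr' v]
  simp only [map_sum, map_smul, hb, inner_sum, real_inner_smul_right, real_inner_comm v]
  congr! 1 with i; ring

theorem continuous_quadForm (H : Matrix (Fin d) (Fin d) ℝ) : Continuous (quadForm H) := by
  unfold quadForm
  fun_prop

theorem Matrix.PosSemidef.quadForm_nonneg {H : Matrix (Fin d) (Fin d) ℝ} (hH : H.PosSemidef)
    (v : EuclideanSpace ℝ (Fin d)) : 0 ≤ quadForm H v := by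
  rw [hH.1.quadForm_eq_sum]
  exact Finset.sum_nonneg fun i _ => mul_nonneg (hH.eigenvalues_nonneg i) (sq_nonneg _)

end QuadForm

namespace IsUniformOnSphere

variable {d : ℕ} {μ : Measure (EuclideanSpace ℝ (Fin d))}

local notation "ℝᵈ" => EuclideanSpace ℝ (Fin d)

theorem ae_norm_eq (hμ : IsUniformOnSphere d μ) : ∀ᵐ u ∂μ, ‖u‖ = √d := by
  have := hμ.1
  have hcompl : μ (Metric.sphere (0 : ℝᵈ) √d)ᶜ = 0 :=
    (prob_compl_eq_zero_iff Metric.isClosed_sphere.measurableSet).2 hμ.2.1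
  filter_upwards [measure_eq_zero_iff_ae_notMem.1 hcompl] with u hu
  simpa using hu

theorem ae_sum_coord_sq (hμ : IsUniformOnSphere d μ) : ∀ᵐ u ∂μ, ∑ i, u i ^ 2 = (d : ℝ) := by
  filter_upwards [hμ.ae_norm_eq] with u hu
  rw [← sq_sqrt (Nat.cast_nonneg d), ← hu, EuclideanSpace.norm_sq_eq]
  simp

theorem integrable_of_continuous (hμ : IsUniformOnSphere d μ) {f : ℝᵈ → ℝ} (hf : Continuous f) :
    Integrable f μ := by
  have := hμ.1
  obtain ⟨C, hC⟩ := (isCompact_sphere (0 : ℝᵈ) √d).exists_bound_of_continuousOn hf.continuousOn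
  refine (integrable_const C).mono' hf.aestronglyMeasurable ?_
  filter_upwards [hμ.ae_norm_eq] with u hu
  exact hC u (by simpa using hu)

theorem integral_comp_linearIsometryEquiv (hμ : IsUniformOnSphere d μ) (T : ℝᵈ ≃ₗᵢ[ℝ] ℝᵈ)
    (f : ℝᵈ → ℝ) : ∫ u, f (T u) ∂μ = ∫ u, f u ∂μ :=
  MeasurePreserving.integral_comp' (f := T.toHomeomorph.toMeasurableEquiv)
    ⟨T.continuous.measurable, hμ.2.2 T⟩ f

theorem integral_inner_inner_eq (hμ : IsUniformOnSphere d μ) (φ : ℝ → ℝ → ℝ) {v w v' w' : ℝᵈ}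
    (hv : ‖v‖ = ‖v'‖) (hw : ‖w‖ = ‖w'‖) (hvw : ⟪v, w⟫ = ⟪v', w'⟫) :
    ∫ u, φ ⟪v, u⟫ ⟪w, u⟫ ∂μ = ∫ u, φ ⟪v', u⟫ ⟪w', u⟫ ∂μ := by
  obtain ⟨T, hTv, hTw⟩ := exists_linearIsometryEquiv_map_pair hv.symm hw.symm hvw.symm
  rw [← hμ.integral_comp_linearIsometryEquiv T]
  simp only [← hTv, ← hTw, LinearIsometryEquiv.inner_map_map]

theorem integral_inner_eq (hμ : IsUniformOnSphere d μ) (φ : ℝ → ℝ) {v v' : ℝᵈ}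
    (hv : ‖v‖ = ‖v'‖) : ∫ u, φ ⟪v, u⟫ ∂μ = ∫ u, φ ⟪v', u⟫ ∂μ :=
  hμ.integral_inner_inner_eq (fun s _ => φ s) hv hv
    (by rw [real_inner_self_eq_norm_sq, real_inner_self_eq_norm_sq, hv])

theorem integral_coord_sq (hμ : IsUniformOnSphere d μ) (i : Fin d) : ∫ u, u i ^ 2 ∂μ = 1 := by
  have := hμ.1
  have hcoord : ∀ j, ∫ u, u j ^ 2 ∂μ = ∫ u, u i ^ 2 ∂μ := fun j => by
    simpa [EuclideanSpace.inner_single_left] using hμ.integral_inner_eq (· ^ 2)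
      (v := EuclideanSpace.single j 1) (v' := EuclideanSpace.single i 1) (by simp)
  have hsum : ∑ j, ∫ u, u j ^ 2 ∂μ = (d : ℝ) := by
    rw [← integral_finsetSum _ fun j _ => hμ.integrable_of_continuous (by fun_prop)]
    simp [integral_congr_ae hμ.ae_sum_coord_sq]
  simp only [hcoord, Finset.sum_const, Finset.card_univ, Fintype.card_fin, nsmul_eq_mul] at hsum
  have : (d : ℝ) ≠ 0 := Nat.cast_ne_zero.2 i.pos.ne'
  field_simp at hsum
  linarith

theorem integral_inner_sq (hμ : IsUniformOnSphere d μ) (hd : 1 ≤ d) (v : ℝᵈ) :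
    ∫ u, ⟪v, u⟫ ^ 2 ∂μ = ‖v‖ ^ 2 := by
  set i₀ : Fin d := ⟨0, hd⟩
  calc ∫ u, ⟪v, u⟫ ^ 2 ∂μ = ∫ u, ⟪‖v‖ • EuclideanSpace.single i₀ (1 : ℝ), u⟫ ^ 2 ∂μ :=
        hμ.integral_inner_eq (· ^ 2) (by simp [norm_smul])
    _ = ‖v‖ ^ 2 := by
        simp [real_inner_smul_left, EuclideanSpace.inner_single_left, mul_pow, integral_const_mul,
          hμ.integral_coord_sq]

theorem integral_coord_coord_eq (hμ : IsUniformOnSphere d μ) (φ : ℝ → ℝ → ℝ) {i j i' j' : Fin d}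
    (hij : i ≠ j) (hij' : i' ≠ j') :
    ∫ u, φ (u i) (u j) ∂μ = ∫ u, φ (u i') (u j') ∂μ := by
  simpa [EuclideanSpace.inner_single_left] using hμ.integral_inner_inner_eq φ
    (v := EuclideanSpace.single i 1) (w := EuclideanSpace.single j 1)
    (v' := EuclideanSpace.single i' 1) (w' := EuclideanSpace.single j' 1) (by simp) (by simp)
    (by simp [EuclideanSpace.inner_single_left, hij, hij'])

theorem integral_coord_pow_four_eq (hμ : IsUniformOnSphere d μ) {i j : Fin d} (hij : i ≠ j) :
    ∫ u, u i ^ 4 ∂μ = 3 * ∫ u, u i ^ 2 * u j ^ 2 ∂μ := by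
  set a : ℝᵈ := EuclideanSpace.single i 1 + EuclideanSpace.single j 1
  set b : ℝᵈ := EuclideanSpace.single i 1 - EuclideanSpace.single j 1
  have hrot := hμ.integral_inner_inner_eq (fun s t => s ^ 2 * t ^ 2) (v := a) (w := b)
    (v' := √2 • EuclideanSpace.single i 1) (w' := √2 • EuclideanSpace.single j 1)
    ((sq_eq_sq₀ (norm_nonneg _) (norm_nonneg _)).1 (by
      rw [norm_add_sq_real, norm_smul]; simp [EuclideanSpace.inner_single_left, hij]; norm_num))
    ((sq_eq_sq₀ (norm_nonneg _) (norm_nonneg _)).1 (by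
      rw [norm_sub_sq_real, norm_smul]; simp [EuclideanSpace.inner_single_left, hij]; norm_num))
    (by simp [a, b, inner_add_left, inner_sub_right, real_inner_smul_left, real_inner_smul_right,
      EuclideanSpace.inner_single_left, hij, hij.symm])
  have hj4 : ∫ u, u j ^ 4 ∂μ = ∫ u, u i ^ 4 ∂μ := by
    simpa [EuclideanSpace.inner_single_left] using hμ.integral_inner_eq (· ^ 4)
      (v := EuclideanSpace.single j 1) (v' := EuclideanSpace.single i 1) (by simp)
  simp only [a, b, inner_add_left, inner_sub_left, real_inner_smul_left,
    EuclideanSpace.inner_single_left, map_one, one_mul] at hrot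
  have hL : ∫ u, (u i + u j) ^ 2 * (u i - u j) ^ 2 ∂μ
      = ∫ u, u i ^ 4 ∂μ + ∫ u, u j ^ 4 ∂μ - 2 * ∫ u, u i ^ 2 * u j ^ 2 ∂μ := by
    rw [← integral_add, ← integral_const_mul, ← integral_sub]
    · congr 1 with u; ring
    all_goals exact hμ.integrable_of_continuous (by fun_prop)
  have hR : ∫ u, (√2 * u i) ^ 2 * (√2 * u j) ^ 2 ∂μ = 4 * ∫ u, u i ^ 2 * u j ^ 2 ∂μ := by
    rw [← integral_const_mul]
    congr 1 with u
    have : √2 ^ 2 = 2 := sq_sqrt zero_le_two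
    linear_combination (u i ^ 2 * u j ^ 2 * (√2 ^ 2 + 2)) * this
  linarith

theorem integral_coord_pow_four_add (hμ : IsUniformOnSphere d μ) {i j : Fin d} (hij : i ≠ j) :
    ∫ u, u i ^ 4 ∂μ + (d - 1) * ∫ u, u i ^ 2 * u j ^ 2 ∂μ = d := by
  have hparseval : ∀ᵐ u ∂μ, ∑ k, u i ^ 2 * u k ^ 2 = (d : ℝ) * u i ^ 2 := by
    filter_upwards [hμ.ae_sum_coord_sq] with u hu
    rw [← Finset.mul_sum, hu, mul_comm]
  have hsum : ∑ k, ∫ u, u i ^ 2 * u k ^ 2 ∂μ = (d : ℝ) := by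
    rw [← integral_finsetSum _ fun k _ => hμ.integrable_of_continuous (by fun_prop),
      integral_congr_ae hparseval, integral_const_mul, hμ.integral_coord_sq, mul_one]
  rw [← Finset.add_sum_erase _ _ (Finset.mem_univ i)] at hsum
  have hoff : ∀ k ∈ Finset.univ.erase i, ∫ u, u i ^ 2 * u k ^ 2 ∂μ = ∫ u, u i ^ 2 * u j ^ 2 ∂μ :=
    fun k hk => hμ.integral_coord_coord_eq (fun s t => s ^ 2 * t ^ 2)
      (Finset.ne_of_mem_erase hk).symm hij
  rw [Finset.sum_congr rfl hoff, Finset.sum_const,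
    Finset.card_erase_of_mem (Finset.mem_univ i)] at hsum
  have hd : 1 ≤ d := i.pos
  simp only [Finset.card_univ, Fintype.card_fin, nsmul_eq_mul, Nat.cast_sub hd, Nat.cast_one,
    ← pow_add] at hsum
  exact hsum

theorem integral_coord_sq_mul_coord_sq (hμ : IsUniformOnSphere d μ) {i j : Fin d} (hij : i ≠ j) :
    ∫ u, u i ^ 2 * u j ^ 2 ∂μ = d / (d + 2) := by
  have hsum := hμ.integral_coord_pow_four_add hij
  rw [hμ.integral_coord_pow_four_eq hij] at hsum
  field_simp
  linarith

theorem integral_inner_pow_four (hμ : IsUniformOnSphere d μ) (hd : 2 ≤ d) (v : ℝᵈ) :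
    ∫ u, ⟪v, u⟫ ^ 4 ∂μ = 3 * d / (d + 2) * ‖v‖ ^ 4 := by
  set i₀ : Fin d := ⟨0, by omega⟩
  have hne : i₀ ≠ ⟨1, hd⟩ := by simp [i₀, Fin.ext_iff]
  calc ∫ u, ⟪v, u⟫ ^ 4 ∂μ = ∫ u, ⟪‖v‖ • EuclideanSpace.single i₀ (1 : ℝ), u⟫ ^ 4 ∂μ :=
        hμ.integral_inner_eq (· ^ 4) (by simp [norm_smul])
    _ = ‖v‖ ^ 4 * ∫ u, u i₀ ^ 4 ∂μ := by
        simp [real_inner_smul_left, EuclideanSpace.inner_single_left, mul_pow, integral_const_mul]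
    _ = 3 * d / (d + 2) * ‖v‖ ^ 4 := by
        rw [hμ.integral_coord_pow_four_eq hne, hμ.integral_coord_sq_mul_coord_sq hne]
        ring

theorem integral_inner_sq_mul_inner_sq_of_inner_eq_zero (hμ : IsUniformOnSphere d μ)
    (hd : 2 ≤ d) {v w : ℝᵈ} (hvw : ⟪v, w⟫ = 0) :
    ∫ u, ⟪v, u⟫ ^ 2 * ⟪w, u⟫ ^ 2 ∂μ = d / (d + 2) * ‖v‖ ^ 2 * ‖w‖ ^ 2 := by
  set i₀ : Fin d := ⟨0, by omega⟩
  set i₁ : Fin d := ⟨1, hd⟩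
  have hne : i₀ ≠ i₁ := by simp [i₀, i₁, Fin.ext_iff]
  calc ∫ u, ⟪v, u⟫ ^ 2 * ⟪w, u⟫ ^ 2 ∂μ
        = ∫ u, ⟪‖v‖ • EuclideanSpace.single i₀ (1 : ℝ), u⟫ ^ 2
            * ⟪‖w‖ • EuclideanSpace.single i₁ (1 : ℝ), u⟫ ^ 2 ∂μ :=
        hμ.integral_inner_inner_eq (fun s t => s ^ 2 * t ^ 2) (by simp [norm_smul])
          (by simp [norm_smul])
          (by simp [hvw, real_inner_smul_left, real_inner_smul_right,
            EuclideanSpace.inner_single_left, hne.symm])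
    _ = ‖v‖ ^ 2 * ‖w‖ ^ 2 * ∫ u, u i₀ ^ 2 * u i₁ ^ 2 ∂μ := by
        rw [← integral_const_mul]
        congr 1 with u
        simp only [real_inner_smul_left, EuclideanSpace.inner_single_left, map_one, one_mul]
        ring
    _ = d / (d + 2) * ‖v‖ ^ 2 * ‖w‖ ^ 2 := by
        rw [hμ.integral_coord_sq_mul_coord_sq hne]
        ring

theorem integral_inner_pow_three_mul_inner (hμ : IsUniformOnSphere d μ) {v w : ℝᵈ}
    (hvw : ⟪v, w⟫ = 0) : ∫ u, ⟪v, u⟫ ^ 3 * ⟪w, u⟫ ∂μ = 0 := by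
  have hflip := hμ.integral_inner_inner_eq (fun s t => s ^ 3 * t) (v' := v) (w' := -w) rfl
    (norm_neg w).symm (by rw [inner_neg_right, hvw, neg_zero])
  simp only [inner_neg_left, mul_neg, integral_neg] at hflip
  linarith

theorem integral_inner_sq_mul_inner_sq (hμ : IsUniformOnSphere d μ) (hd : 2 ≤ d) (g : ℝᵈ)
    {v : ℝᵈ} (hv : ‖v‖ = 1) :
    ∫ u, ⟪g, u⟫ ^ 2 * ⟪v, u⟫ ^ 2 ∂μ = d / (d + 2) * (‖g‖ ^ 2 + 2 * ⟪g, v⟫ ^ 2) := by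
  set α := ⟪g, v⟫
  set p := g - α • v
  have hvp : ⟪v, p⟫ = 0 := by
    rw [inner_sub_right, real_inner_smul_right, real_inner_self_eq_norm_sq, hv, real_inner_comm]
    ring
  have hpyth : ‖g‖ ^ 2 = α ^ 2 + ‖p‖ ^ 2 := by
    rw [show g = α • v + p by simp [p], norm_add_sq_real, real_inner_smul_left, hvp, norm_smul,
      hv, Real.norm_eq_abs, mul_one, sq_abs, mul_zero, mul_zero, add_zero]
  have hexpand : ∀ u, ⟪g, u⟫ ^ 2 * ⟪v, u⟫ ^ 2
      = α ^ 2 * ⟪v, u⟫ ^ 4 + 2 * α * (⟪v, u⟫ ^ 3 * ⟪p, u⟫) + ⟪v, u⟫ ^ 2 * ⟪p, u⟫ ^ 2 := by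
    intro u
    have : ⟪p, u⟫ = ⟪g, u⟫ - α * ⟪v, u⟫ := by rw [inner_sub_left, real_inner_smul_left]
    rw [this]
    ring
  simp_rw [hexpand]
  rw [integral_add, integral_add, integral_const_mul, integral_const_mul,
    hμ.integral_inner_pow_four hd, hμ.integral_inner_pow_three_mul_inner hvp,
    hμ.integral_inner_sq_mul_inner_sq_of_inner_eq_zero hd hvp, hpyth, hv]
  · ring
  all_goals exact hμ.integrable_of_continuous (by fun_prop)

theorem integral_inner_sq_mul_inner_sq_le (hμ : IsUniformOnSphere d μ) (hd : 1 ≤ d) (g : ℝᵈ)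
    {v : ℝᵈ} (hv : ‖v‖ = 1) :
    ∫ u, ⟪g, u⟫ ^ 2 * ⟪v, u⟫ ^ 2 ∂μ ≤ ‖g‖ ^ 2 + 2 * ⟪g, v⟫ ^ 2 := by
  rcases Nat.lt_or_ge d 2 with hd₁ | hd₂
  · have hle : ∀ᵐ u ∂μ, ⟪g, u⟫ ^ 2 * ⟪v, u⟫ ^ 2 ≤ ⟪g, u⟫ ^ 2 := by
      filter_upwards [hμ.ae_norm_eq] with u hu
      have hvu : ⟪v, u⟫ ^ 2 ≤ 1 := by
        have := abs_real_inner_le_norm v u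
        rw [hv, one_mul, hu, show (d : ℝ) = 1 by norm_cast; omega, sqrt_one] at this
        exact (sq_le_one_iff_abs_le_one _).2 this
      exact mul_le_of_le_one_right (sq_nonneg _) hvu
    calc ∫ u, ⟪g, u⟫ ^ 2 * ⟪v, u⟫ ^ 2 ∂μ ≤ ∫ u, ⟪g, u⟫ ^ 2 ∂μ :=
          integral_mono_ae (hμ.integrable_of_continuous (by fun_prop))
            (hμ.integrable_of_continuous (by fun_prop)) hle
      _ = ‖g‖ ^ 2 := hμ.integral_inner_sq hd g
      _ ≤ ‖g‖ ^ 2 + 2 * ⟪g, v⟫ ^ 2 := le_add_of_nonneg_right (by positivity)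
  · rw [hμ.integral_inner_sq_mul_inner_sq hd₂ g hv]
    refine mul_le_of_le_one_left (by positivity) ((div_le_one (by positivity)).2 (by linarith))

theorem integral_quadForm (hμ : IsUniformOnSphere d μ) (hd : 1 ≤ d)
    {H : Matrix (Fin d) (Fin d) ℝ} (hH : H.IsHermitian) : ∫ u, quadForm H u ∂μ = H.trace := by
  simp_rw [hH.quadForm_eq_sum]
  rw [integral_finsetSum _ fun i _ => hμ.integrable_of_continuous (by fun_prop)]
  simp [integral_const_mul, hμ.integral_inner_sq hd, hH.trace_eq_sum_eigenvalues]

theorem integral_inner_sq_mul_quadForm_le (hμ : IsUniformOnSphere d μ) (hd : 1 ≤ d)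
    {H : Matrix (Fin d) (Fin d) ℝ} (hH : H.PosSemidef) (g : ℝᵈ) :
    ∫ u, ⟪g, u⟫ ^ 2 * quadForm H u ∂μ ≤ H.trace * ‖g‖ ^ 2 + 2 * quadForm H g := by
  set b := hH.1.eigenvectorBasis
  set ev := hH.1.eigenvalues
  calc ∫ u, ⟪g, u⟫ ^ 2 * quadForm H u ∂μ
      = ∑ i, ev i * ∫ u, ⟪g, u⟫ ^ 2 * ⟪b i, u⟫ ^ 2 ∂μ := by
        simp_rw [hH.1.quadForm_eq_sum, Finset.mul_sum]
        rw [integral_finsetSum _ fun i _ => hμ.integrable_of_continuous (by fun_prop)]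
        refine Finset.sum_congr rfl fun i _ => ?_
        rw [← integral_const_mul]
        congr 1 with u
        ring
    _ ≤ ∑ i, ev i * (‖g‖ ^ 2 + 2 * ⟪g, b i⟫ ^ 2) :=
        Finset.sum_le_sum fun i _ => mul_le_mul_of_nonneg_left
          (hμ.integral_inner_sq_mul_inner_sq_le hd g (b.orthonormal.1 i)) (hH.eigenvalues_nonneg i)
    _ = H.trace * ‖g‖ ^ 2 + 2 * quadForm H g := by
        rw [hH.1.quadForm_eq_sum, hH.1.trace_eq_sum_eigenvalues]
        simp only [mul_add, Finset.sum_add_distrib, Finset.sum_mul, Finset.mul_sum,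
          real_inner_comm g, RCLike.ofReal_real_eq_id, id]
        congr 1
        exact Finset.sum_congr rfl fun i _ => by ring

theorem integral_quadForm_smul_le (hμ : IsUniformOnSphere d μ) (hd : 1 ≤ d)
    {H : Matrix (Fin d) (Fin d) ℝ} (hH : H.PosSemidef) {f : ℝᵈ → ℝ} (hf : Continuous f) (g : ℝᵈ)
    {K : ℝ} (hfK : ∀ᵐ u ∂μ, f u ^ 2 ≤ 2 * ⟪g, u⟫ ^ 2 + K) :
    ∫ u, quadForm H (f u • u) ∂μ ≤ 2 * (H.trace * ‖g‖ ^ 2 + 2 * quadForm H g) + K * H.trace := by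
  have hQ := continuous_quadForm H
  simp_rw [quadForm_smul]
  calc ∫ u, f u ^ 2 * quadForm H u ∂μ ≤ ∫ u, (2 * ⟪g, u⟫ ^ 2 + K) * quadForm H u ∂μ := by
        refine integral_mono_ae (hμ.integrable_of_continuous (by fun_prop))
          (hμ.integrable_of_continuous (by fun_prop)) ?_
        filter_upwards [hfK] with u hu
        exact mul_le_mul_of_nonneg_right hu (hH.quadForm_nonneg u)
    _ = 2 * ∫ u, ⟪g, u⟫ ^ 2 * quadForm H u ∂μ + K * ∫ u, quadForm H u ∂μ := by
        simp_rw [add_mul, mul_assoc]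
        rw [integral_add, integral_const_mul, integral_const_mul]
        all_goals exact hμ.integrable_of_continuous (by fun_prop)
    _ ≤ 2 * (H.trace * ‖g‖ ^ 2 + 2 * quadForm H g) + K * H.trace := by
        rw [hμ.integral_quadForm hd hH.1]
        gcongr
        exact hμ.integral_inner_sq_mul_quadForm_le hd hH g

end IsUniformOnSphere

theorem zo_gradient_H_quadratic_form_bound_general
    (d : ℕ) (hd : 1 ≤ d) (μ : Measure (EuclideanSpace ℝ (Fin d)))
    (hμ : IsUniformOnSphere d μ)
    (ell r lam : ℝ) (hlam : 0 < lam)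
    (F : EuclideanSpace ℝ (Fin d) → ℝ)
    (hF : Differentiable ℝ F)
    (hsmooth : ∀ x y : EuclideanSpace ℝ (Fin d),
      ‖gradient F x - gradient F y‖ ≤ ell * ‖x - y‖)
    (H : Matrix (Fin d) (Fin d) ℝ) (hHpsd : H.PosSemidef)
    (hHnorm : ‖(Matrix.toEuclideanCLM (𝕜 := ℝ) (n := Fin d)) H‖ ≤ ell)
    (hHtr : H.trace ≤ r * ell)
    (x : EuclideanSpace ℝ (Fin d)) :
    (∫ u, quadForm H (((F (x + lam • u) - F (x - lam • u)) / (2 * lam)) • u) ∂μ) ≤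
      2 * ell * (r + 2) * ‖gradient F x‖ ^ 2 + (ell ^ 3 / 2) * lam ^ 2 * d ^ 2 * r := by
  set g := gradient F x
  have hFc := hF.continuous
  have hsq : ∀ᵐ u ∂μ, ((F (x + lam • u) - F (x - lam • u)) / (2 * lam)) ^ 2
      ≤ 2 * ⟪g, u⟫ ^ 2 + ell ^ 2 * lam ^ 2 * d ^ 2 / 2 := by
    filter_upwards [hμ.ae_norm_eq] with u hu
    have hu4 : ‖u‖ ^ 4 = (d : ℝ) ^ 2 := by
      rw [hu, show 4 = 2 * 2 by rfl, pow_mul, sq_sqrt (Nat.cast_nonneg d)]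
    simpa only [hu4] using sq_centralDiff_le hF hsmooth x u hlam
  have hQg : quadForm H g ≤ ell * ‖g‖ ^ 2 :=
    (quadForm_le_opNorm_mul_norm_sq H g).trans (by gcongr)
  calc _ ≤ 2 * (H.trace * ‖g‖ ^ 2 + 2 * quadForm H g)
        + ell ^ 2 * lam ^ 2 * d ^ 2 / 2 * H.trace :=
        hμ.integral_quadForm_smul_le hd hHpsd (by fun_prop) g hsq
    _ ≤ 2 * (r * ell * ‖g‖ ^ 2 + 2 * (ell * ‖g‖ ^ 2))
        + ell ^ 2 * lam ^ 2 * d ^ 2 / 2 * (r * ell) := by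
        gcongr
    _ = 2 * ell * (r + 2) * ‖g‖ ^ 2 + (ell ^ 3 / 2) * lam ^ 2 * d ^ 2 * r := by ring

theorem zo_gradient_H_quadratic_form_bound
    (d : ℕ) (hd : 1 ≤ d) (μ : Measure (EuclideanSpace ℝ (Fin d)))
    (hμ : IsUniformOnSphere d μ)
    (ell r lam : ℝ) (hr : 0 < r) (hlam : 0 < lam)
    (F : EuclideanSpace ℝ (Fin d) → ℝ)
    (hF : Differentiable ℝ F)
    (hsmooth : ∀ x y : EuclideanSpace ℝ (Fin d),
      ‖gradient F x - gradient F y‖ ≤ ell * ‖x - y‖)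
    (H : Matrix (Fin d) (Fin d) ℝ) (hHsym : H.IsSymm) (hHpsd : H.PosSemidef)
    (hHnorm : ‖(Matrix.toEuclideanCLM (𝕜 := ℝ) (n := Fin d)) H‖ ≤ ell)
    (hHtr : H.trace ≤ r * ell)
    (x : EuclideanSpace ℝ (Fin d)) :
    (∫ u, quadForm H (((F (x + lam • u) - F (x - lam • u)) / (2 * lam)) • u) ∂μ) ≤
      2 * ell * (r + 2) * ‖gradient F x‖ ^ 2 + (ell ^ 3 / 2) * lam ^ 2 * d ^ 2 * r :=
  zo_gradient_H_quadratic_form_bound_general d hd μ hμ ell r lam hlam F hF hsmooth H hHpsd hHnorm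
    hHtr x
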